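/- arXiv:1501.07337 — 10 statements merged into one kernel-verified Lean document; each statement's English description precedes it below -/
import Mathlib

section
/- Let R be a ring and u₁, u₂ ∈ R satisfy the 'odd plactic' relations u₂u₁u₂ = −u₂u₂u₁ and u₁u₂u₁ = −u₂u₁u₁. Then the noncommutative elementary polynomials e₁ = u₁ + u₂ and e₂ = u₂u₁ anticommute: e₁e₂ + e₂e₁ = 0. -/
theorem odd_plactic_anticommute {R : Type*} [Ring R] (u₁ u₂ : R)
    (h1 : u₂ * u₁ * u₂ = -(u₂ * u₂ * u₁))
    (h2 : u₁ * u₂ * u₁ = -(u₂ * u₁ * u₁)) :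
    (u₁ + u₂) * (u₂ * u₁) + (u₂ * u₁) * (u₁ + u₂) = 0 := by
  rw [add_mul, mul_add, ← mul_assoc, ← mul_assoc, h1, h2]
  abel
end

section
/- Define the additive (affine) divided difference operator ∂_{xy}[k] on rational functions (or polynomials) in x, y, z by ∂_{xy}[k](f(x,y)) = (f(x,y) − f(y − k, x + k))/(x − y + k). Then for all parameters p, q the three-term relation ∂_{xy}[p] ∘ ∂_{yz}[q] = ∂_{xz}[p+q] ∘ ∂_{xy}[p] + ∂_{yz}[q] ∘ ∂_{xz}[p+q] holds as an identity of operators. -/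
open MvPolynomial

/-- Three-term relation for additive (affine) divided difference operators
`∂_{xy}[k](f) = (f(x,y,z) − f(y−k, x+k, z))/(x − y + k)` acting on polynomials in
`x = X 0`, `y = X 1`, `z = X 2`:
`∂_{xy}[p] ∘ ∂_{yz}[q] = ∂_{xz}[p+q] ∘ ∂_{xy}[p] + ∂_{yz}[q] ∘ ∂_{xz}[p+q]`.
Each application of a divided difference operator is encoded by a witness of the
defining equation. -/
theorem affine_divided_difference_three_term {k : Type*} [Field k] [CharZero k]
    (p q : k) (f a A b B c C' : MvPolynomial (Fin 3) k)
    (ha : (X 1 - X 2 + C q) * a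
        = f - aeval ![X 0, X 2 - C q, X 1 + C q] f)
    (hA : (X 0 - X 1 + C p) * A
        = a - aeval ![X 1 - C p, X 0 + C p, X 2] a)
    (hb : (X 0 - X 1 + C p) * b
        = f - aeval ![X 1 - C p, X 0 + C p, X 2] f)
    (hB : (X 0 - X 2 + C (p + q)) * B
        = b - aeval ![X 2 - C (p + q), X 1, X 0 + C (p + q)] b)
    (hc : (X 0 - X 2 + C (p + q)) * c
        = f - aeval ![X 2 - C (p + q), X 1, X 0 + C (p + q)] f)
    (hC : (X 1 - X 2 + C q) * C'
        = c - aeval ![X 0, X 2 - C q, X 1 + C q] c) :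
    A = B + C' := by
  set σ1 := aeval (R := k) (![X 1 - C p, X 0 + C p, X 2] : Fin 3 → MvPolynomial (Fin 3) k)
  set σ2 := aeval (R := k) (![X 0, X 2 - C q, X 1 + C q] : Fin 3 → MvPolynomial (Fin 3) k)
  set σ3 := aeval (R := k)
    (![X 2 - C (p + q), X 1, X 0 + C (p + q)] : Fin 3 → MvPolynomial (Fin 3) k)
  set u : MvPolynomial (Fin 3) k := X 0 - X 1 + C p with hu
  set v : MvPolynomial (Fin 3) k := X 1 - X 2 + C q with hv
  set w : MvPolynomial (Fin 3) k := X 0 - X 2 + C (p + q) with hw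
  have hpq : (C (p + q) : MvPolynomial (Fin 3) k) = C p + C q := by rw [C_add]
  set g := aeval (R := k)
    (![X 1 - C p, X 2 - C q, X 0 + C (p + q)] : Fin 3 → MvPolynomial (Fin 3) k) f with hg
  -- composition identities
  have hvec12 : (fun i => σ1 ((![X 0, X 2 - C q, X 1 + C q] : Fin 3 → MvPolynomial (Fin 3) k) i))
      = (![X 1 - C p, X 2 - C q, X 0 + C (p + q)] : Fin 3 → MvPolynomial (Fin 3) k) := by
    funext i
    fin_cases i <;> simp [σ1, hpq] <;> ring
  have hvec31 : (fun i => σ3 ((![X 1 - C p, X 0 + C p, X 2] : Fin 3 → MvPolynomial (Fin 3) k) i))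
      = (![X 1 - C p, X 2 - C q, X 0 + C (p + q)] : Fin 3 → MvPolynomial (Fin 3) k) := by
    funext i
    fin_cases i <;> simp [σ3, hpq] <;> ring
  have hvec23 : (fun i => σ2 ((![X 2 - C (p + q), X 1, X 0 + C (p + q)] :
        Fin 3 → MvPolynomial (Fin 3) k) i))
      = (![X 1 - C p, X 2 - C q, X 0 + C (p + q)] : Fin 3 → MvPolynomial (Fin 3) k) := by
    funext i
    fin_cases i <;> simp [σ2, hpq] <;> ring
  have h12 : σ1 (σ2 f) = g := by
    show σ1 (aeval ![X 0, X 2 - C q, X 1 + C q] f) = g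
    rw [comp_aeval_apply, hvec12]
  have h31 : σ3 (σ1 f) = g := by
    show σ3 (aeval ![X 1 - C p, X 0 + C p, X 2] f) = g
    rw [comp_aeval_apply, hvec31]
  have h23 : σ2 (σ3 f) = g := by
    show σ2 (aeval ![X 2 - C (p + q), X 1, X 0 + C (p + q)] f) = g
    rw [comp_aeval_apply, hvec23]
  -- images of the linear factors
  have s1v : σ1 v = w := by
    simp [hv, hw, σ1, hpq]
    ring
  have s3u : σ3 u = -v := by
    simp [hu, hv, σ3, hpq]
    ring
  have s2w : σ2 w = u := by
    simp [hu, hw, σ2, hpq]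
    ring
  -- image of the defining equations under the substitutions
  have h3 : w * σ1 a = σ1 f - g := by
    have h := congrArg σ1 ha
    rw [map_mul, map_sub, s1v, h12] at h
    exact h
  have h6 : (-v) * σ3 b = σ3 f - g := by
    have h := congrArg σ3 hb
    rw [map_mul, map_sub, s3u, h31] at h
    exact h
  have h9 : u * σ2 c = σ2 f - g := by
    have h := congrArg σ2 hc
    rw [map_mul, map_sub, s2w, h23] at h
    exact h
  -- nonvanishing of the linear factors
  have hu0 : u ≠ 0 := by
    intro h0
    have := congrArg (eval (![1 - p, 0, 0] : Fin 3 → k)) h0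
    simp [hu] at this
  have hv0 : v ≠ 0 := by
    intro h0
    have := congrArg (eval (![0, 1 - q, 0] : Fin 3 → k)) h0
    simp [hv] at this
  have hw0 : w ≠ 0 := by
    intro h0
    have := congrArg (eval (![1 - (p + q), 0, 0] : Fin 3 → k)) h0
    simp [hw] at this
  have huvw : u * v * w ≠ 0 := by
    exact mul_ne_zero (mul_ne_zero hu0 hv0) hw0
  apply mul_left_cancel₀ huvw
  have eA : u * v * w * A = w * f - w * σ2 f - v * σ1 f + v * g := by
    linear_combination (v * w) * hA + w * ha - v * h3
  have eB : u * v * w * B = v * f - v * σ1 f + u * σ3 f - u * g := by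
    linear_combination (u * v) * hB + v * hb + u * h6
  have eC : u * v * w * C' = u * f - u * σ3 f - w * σ2 f + w * g := by
    linear_combination (u * w) * hC + u * hc - w * h9
  have hsum : w = u + v := by rw [hu, hv, hw, hpq]; ring
  linear_combination eA - eB - eC + (f - g) * hsum
end

section
/- Fix parameters a, b, c, h, e in a field k of characteristic 0 and indices i < j. Define the operator T_{ij} = a·Id + (b·x_i + c·x_j + h + e·x_i x_j)·∂_{ij} on the polynomial ring k[x₁, ..., x_n], where ∂_{ij} is the divided difference (f − s_{ij}f)/(x_i − x_j). Then T_{ij}² = (2a + b − c)·T_{ij} − a(a + b − c)·Id. -/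
open MvPolynomial

/-!
The divided difference `∂_{ij} f` is symmetric in `x_i, x_j`, and the coefficient
`q = b x_i + c x_j + h + e x_i x_j` satisfies `q - s_{ij} q = (b - c)(x_i - x_j)`.
Hence `T_{ij} f - s_{ij}(T_{ij} f) = (x_i - x_j)(a + b - c) ∂_{ij} f`, i.e.
`∂_{ij} T_{ij} = (a + b - c) ∂_{ij}`, and the quadratic relation follows by expanding
`T_{ij}² f = a T_{ij} f + (a + b - c) q ∂_{ij} f` with `q ∂_{ij} f = T_{ij} f - a f`.
-/

namespace MvPolynomial

variable {σ R : Type*} [CommRing R]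

theorem X_sub_X_ne_zero [Nontrivial R] {i j : σ} (hij : i ≠ j) :
    (X i - X j : MvPolynomial σ R) ≠ 0 :=
  sub_ne_zero.mpr fun hX => hij (X_injective hX)

variable [DecidableEq σ]

theorem rename_swap_rename_swap (i j : σ) (p : MvPolynomial σ R) :
    rename (Equiv.swap i j) (rename (Equiv.swap i j) p) = p :=
  rename_leftInverse (Equiv.swap_apply_self i j) p

theorem rename_swap_eq_self_of_X_sub_X_mul_eq [IsDomain R] {i j : σ} (hij : i ≠ j)
    {f g : MvPolynomial σ R} (hg : (X i - X j) * g = f - rename (Equiv.swap i j) f) :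
    rename (Equiv.swap i j) g = g := by
  have hswapped := congrArg (rename (Equiv.swap i j)) hg
  simp only [map_mul, map_sub, rename_X, Equiv.swap_apply_left, Equiv.swap_apply_right,
    rename_swap_rename_swap] at hswapped
  apply mul_left_cancel₀ (X_sub_X_ne_zero hij)
  linear_combination -hg - hswapped

theorem rename_swap_hecke_coeff (i j : σ) (b c h e : R) :
    rename (Equiv.swap i j) (C b * X i + C c * X j + C h + C e * X i * X j) =
      C b * X i + C c * X j + C h + C e * X i * X j - C (b - c) * (X i - X j) := by
  simp only [map_add, map_mul, rename_C, rename_X, Equiv.swap_apply_left,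
    Equiv.swap_apply_right, C_sub]
  ring

end MvPolynomial

/-- The divided differences are encoded by witnesses `g₁ = ∂_{ij} f` and
`g₂ = ∂_{ij}(T_{ij} f)`. -/
theorem Tij_hecke_relation_general {k : Type*} [Field k]
    (a b c h e : k) {n : ℕ} (i j : Fin n) (hij : i < j)
    (f g₁ Tf g₂ : MvPolynomial (Fin n) k)
    (hg₁ : (X i - X j) * g₁ = f - rename (Equiv.swap i j) f)
    (hTf : Tf = C a * f + (C b * X i + C c * X j + C h + C e * X i * X j) * g₁)
    (hg₂ : (X i - X j) * g₂ = Tf - rename (Equiv.swap i j) Tf) :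
    C a * Tf + (C b * X i + C c * X j + C h + C e * X i * X j) * g₂
      = C (2 * a + b - c) * Tf - C (a * (a + b - c)) * f := by
  have hne := X_sub_X_ne_zero (R := k) hij.ne
  have hg₁_symm := rename_swap_eq_self_of_X_sub_X_mul_eq hij.ne hg₁
  have hg₂_eq : g₂ = C (a + b - c) * g₁ := by
    apply mul_left_cancel₀ hne
    rw [hg₂, hTf, map_add, map_mul, map_mul, rename_C, rename_swap_hecke_coeff, hg₁_symm]
    simp only [C_add, C_sub]
    linear_combination -C a * hg₁
  rw [hg₂_eq, hTf]
  simp only [map_mul, map_add, map_sub, map_ofNat]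
  ring

/-- For `T_{ij} = a·Id + (b x_i + c x_j + h + e x_i x_j)·∂_{ij}` one has
`T_{ij}² = (2a + b − c)·T_{ij} − a(a + b − c)·Id`.  The divided differences are
encoded by witnesses `g₁ = ∂_{ij} f` and `g₂ = ∂_{ij}(T_{ij} f)`. -/
theorem Tij_hecke_relation {k : Type*} [Field k] [CharZero k]
    (a b c h e : k) {n : ℕ} (i j : Fin n) (hij : i < j)
    (f g₁ Tf g₂ : MvPolynomial (Fin n) k)
    (hg₁ : (X i - X j) * g₁ = f - rename (Equiv.swap i j) f)
    (hTf : Tf = C a * f + (C b * X i + C c * X j + C h + C e * X i * X j) * g₁)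
    (hg₂ : (X i - X j) * g₂ = Tf - rename (Equiv.swap i j) Tf) :
    C a * Tf + (C b * X i + C c * X j + C h + C e * X i * X j) * g₂
      = C (2 * a + b - c) * Tf - C (a * (a + b - c)) * f :=
  Tij_hecke_relation_general a b c h e i j hij f g₁ Tf g₂ hg₁ hTf hg₂
end

section
/- For every n ≥ 0, ∑_{k=0}^{2n} C(n, ⌊k/2⌋)·C(n, ⌊(k+1)/2⌋) = C(2n+1, n), where C(a,b) denotes the binomial coefficient. -/
lemma sum_range_two_mul_pair (f : ℕ → ℕ) (m : ℕ) :
    ∑ k ∈ Finset.range (2 * m), f k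
      = ∑ j ∈ Finset.range m, (f (2 * j) + f (2 * j + 1)) := by
  induction m with
  | zero => simp
  | succ m ih =>
      have h : 2 * (m + 1) = (2 * m + 1) + 1 := by ring
      rw [h, Finset.sum_range_succ, Finset.sum_range_succ, ih,
        Finset.sum_range_succ]
      omega

theorem hilb_PF2n_at_one (n : ℕ) :
    ∑ k ∈ Finset.range (2 * n + 1),
        Nat.choose n (k / 2) * Nat.choose n ((k + 1) / 2)
      = Nat.choose (2 * n + 1) n := by
  have hext : ∑ k ∈ Finset.range (2 * (n + 1)),
        Nat.choose n (k / 2) * Nat.choose n ((k + 1) / 2)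
      = ∑ k ∈ Finset.range (2 * n + 1),
        Nat.choose n (k / 2) * Nat.choose n ((k + 1) / 2) := by
    have h2 : 2 * (n + 1) = (2 * n + 1) + 1 := by ring
    conv_lhs => rw [h2, Finset.sum_range_succ]
    have hd : (2 * n + 1 + 1) / 2 = n + 1 := by omega
    rw [hd, Nat.choose_succ_self, mul_zero, add_zero]
  rw [← hext, sum_range_two_mul_pair]
  have hterm : ∀ j ∈ Finset.range (n + 1),
      (Nat.choose n (2 * j / 2) * Nat.choose n ((2 * j + 1) / 2)
        + Nat.choose n ((2 * j + 1) / 2) * Nat.choose n ((2 * j + 1 + 1) / 2))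
      = Nat.choose n j * Nat.choose (n + 1) (n - j) := by
    intro j hj
    simp only [Finset.mem_range] at hj
    have h1 : 2 * j / 2 = j := by omega
    have h2 : (2 * j + 1) / 2 = j := by omega
    have h3 : (2 * j + 1 + 1) / 2 = j + 1 := by omega
    have h4 : n - j = (n + 1) - (j + 1) := by omega
    rw [h1, h2, h3, h4, Nat.choose_symm (by omega : j + 1 ≤ n + 1),
      Nat.choose_succ_succ n j, mul_add]
  rw [Finset.sum_congr rfl hterm]
  have hv := Nat.add_choose_eq n (n + 1) n
  have hnn : n + (n + 1) = 2 * n + 1 := by ring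
  rw [hnn, Finset.Nat.sum_antidiagonal_eq_sum_range_succ_mk] at hv
  exact hv.symm
end

section
/- For all positive integers n and k, ∏_{1 ≤ i ≤ j ≤ k} (i + j + n − 1)/(i + j − 1) = ∏_{0 ≤ 2a ≤ k−1} C(n + 2k − 2a − 1, n) / C(n + 2a, n), as an identity of rational numbers, where C(·,·) denotes the binomial coefficient. -/
open Finset

private lemma choose_prod (n m : ℕ) :
    (Nat.choose (n + m) n : ℚ) = ∏ s ∈ Finset.Icc 1 m, (((n + s : ℕ) : ℚ) / (s : ℚ)) := by
  induction m with
  | zero => simp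
  | succ m ih =>
    rw [Finset.prod_Icc_succ_top (Nat.le_add_left 1 m), ← ih]
    have h := Nat.add_one_mul_choose_eq (n + m) m
    have hsymm : Nat.choose (n + m) m = Nat.choose (n + m) n := by
      rw [Nat.add_comm]; exact Nat.choose_symm_add
    have hsymm2 : Nat.choose (n + (m + 1)) n = Nat.choose (n + m + 1) (m + 1) :=
      Nat.choose_symm_add
    rw [hsymm] at h
    have hq : ((n : ℚ) + m + 1) * (Nat.choose (n + m) n : ℚ)
        = (Nat.choose (n + m + 1) (m + 1) : ℚ) * ((m : ℚ) + 1) := by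
      exact_mod_cast h
    have hm : ((m : ℚ) + 1) ≠ 0 := by positivity
    rw [hsymm2]
    push_cast
    field_simp
    linarith [hq]

private lemma prod_pos_ne (n a : ℕ) :
    (∏ s ∈ Finset.Icc 1 a, (((n + s : ℕ) : ℚ) / (s : ℚ))) ≠ 0 := by
  apply Finset.prod_ne_zero_iff.2
  intro s hs
  simp only [Finset.mem_Icc] at hs
  have h1 : (0 : ℚ) < ((n + s : ℕ) : ℚ) := by exact_mod_cast Nat.pos_of_ne_zero (by omega)
  have h2 : (0 : ℚ) < (s : ℚ) := by exact_mod_cast hs.1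
  positivity

private lemma choose_ratio (n k a : ℕ) (hk : 0 < k) (ha : 2 * a ≤ k - 1) :
    (Nat.choose (n + 2 * k - 2 * a - 1) n : ℚ) / (Nat.choose (n + 2 * a) n : ℚ)
      = ∏ s ∈ Finset.Icc (2 * a + 1) (2 * k - 2 * a - 1), (((n + s : ℕ) : ℚ) / (s : ℚ)) := by
  have h1 : n + 2 * k - 2 * a - 1 = n + (2 * k - 2 * a - 1) := by omega
  rw [h1, choose_prod n (2 * k - 2 * a - 1), choose_prod n (2 * a)]
  have hle : 2 * a ≤ 2 * k - 2 * a - 1 := by omega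
  have hsplit : (∏ s ∈ Finset.Icc 1 (2 * a), (((n + s : ℕ) : ℚ) / (s : ℚ)))
      * (∏ s ∈ Finset.Icc (2 * a + 1) (2 * k - 2 * a - 1), (((n + s : ℕ) : ℚ) / (s : ℚ)))
      = ∏ s ∈ Finset.Icc 1 (2 * k - 2 * a - 1), (((n + s : ℕ) : ℚ) / (s : ℚ)) := by
    have e1 : Finset.Icc 1 (2 * a) = Finset.Ioc 0 (2 * a) := rfl
    have e2 : Finset.Icc (2 * a + 1) (2 * k - 2 * a - 1) = Finset.Ioc (2 * a) (2 * k - 2 * a - 1) := by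
      ext x; simp [Finset.mem_Icc, Finset.mem_Ioc]
    have e3 : Finset.Icc 1 (2 * k - 2 * a - 1) = Finset.Ioc 0 (2 * k - 2 * a - 1) := rfl
    rw [e1, e2, e3]
    exact Finset.prod_Ioc_consecutive _ (Nat.zero_le _) hle
  rw [← hsplit]
  rw [mul_comm, mul_div_assoc, div_self (prod_pos_ne n (2 * a)), mul_one]

theorem symmetric_plane_partition_product (n k : ℕ) (hn : 0 < n) (hk : 0 < k) :
    (∏ j ∈ Finset.Icc 1 k, ∏ i ∈ Finset.Icc 1 j,
        (((i : ℚ) + j + n - 1) / ((i : ℚ) + j - 1)))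
      = ∏ a ∈ (Finset.range k).filter (fun a => 2 * a ≤ k - 1),
          ((Nat.choose (n + 2 * k - 2 * a - 1) n : ℚ) / (Nat.choose (n + 2 * a) n : ℚ)) := by
  -- rewrite LHS factors as F (i+j-1) where F t = (n+t)/t
  have hL : (∏ j ∈ Finset.Icc 1 k, ∏ i ∈ Finset.Icc 1 j,
        (((i : ℚ) + j + n - 1) / ((i : ℚ) + j - 1)))
      = ∏ j ∈ Finset.Icc 1 k, ∏ i ∈ Finset.Icc 1 j,
        (((n + (i + j - 1) : ℕ) : ℚ) / (((i + j - 1 : ℕ)) : ℚ)) := by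
    apply Finset.prod_congr rfl
    intro j hj
    apply Finset.prod_congr rfl
    intro i hi
    simp only [Finset.mem_Icc] at hj hi
    have h1 : (((n + (i + j - 1) : ℕ)) : ℚ) = (i : ℚ) + j + n - 1 := by
      have : n + (i + j - 1) = n + i + j - 1 := by omega
      rw [this]
      push_cast [Nat.cast_sub (show 1 ≤ n + i + j by omega)]
      ring
    have h2 : (((i + j - 1 : ℕ)) : ℚ) = (i : ℚ) + j - 1 := by
      push_cast [Nat.cast_sub (show 1 ≤ i + j by omega)]
      ring
    rw [h1, h2]
  rw [hL]
  have hR : (∏ a ∈ (Finset.range k).filter (fun a => 2 * a ≤ k - 1),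
          ((Nat.choose (n + 2 * k - 2 * a - 1) n : ℚ) / (Nat.choose (n + 2 * a) n : ℚ)))
      = ∏ a ∈ (Finset.range k).filter (fun a => 2 * a ≤ k - 1),
          ∏ s ∈ Finset.Icc (2 * a + 1) (2 * k - 2 * a - 1), (((n + s : ℕ) : ℚ) / (s : ℚ)) := by
    apply Finset.prod_congr rfl
    intro a ha
    simp only [Finset.mem_filter, Finset.mem_range] at ha
    exact choose_ratio n k a hk ha.2
  rw [hR]
  rw [Finset.prod_sigma' (Finset.Icc 1 k) (fun j => Finset.Icc 1 j)
    (fun j i => (((n + (i + j - 1) : ℕ) : ℚ) / (((i + j - 1 : ℕ)) : ℚ)))]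
  rw [Finset.prod_sigma' ((Finset.range k).filter (fun a => 2 * a ≤ k - 1))
    (fun a => Finset.Icc (2 * a + 1) (2 * k - 2 * a - 1))
    (fun _ s => (((n + s : ℕ) : ℚ) / (s : ℚ)))]
  apply Finset.prod_nbij'
    (i := fun p => ⟨min (p.2 - 1) (k - p.1), p.2 + p.1 - 1⟩)
    (j := fun q => if q.2 ≤ k then ⟨q.2 - q.1, q.1 + 1⟩ else ⟨k - q.1, q.2 + q.1 + 1 - k⟩)
  · rintro ⟨j, i⟩ hp
    simp only [Finset.mem_sigma, Finset.mem_Icc, Finset.mem_filter, Finset.mem_range] at hp ⊢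
    omega
  · rintro ⟨a, s⟩ hq
    simp only [Finset.mem_sigma, Finset.mem_Icc, Finset.mem_filter, Finset.mem_range] at hq
    split_ifs with h
    · dsimp only at h; simp only [Finset.mem_sigma, Finset.mem_Icc]; omega
    · dsimp only at h; simp only [Finset.mem_sigma, Finset.mem_Icc]; omega
  · rintro ⟨j, i⟩ hp
    simp only [Finset.mem_sigma, Finset.mem_Icc] at hp
    dsimp only
    split_ifs with h
    · rw [Sigma.mk.inj_iff]; simp only [heq_eq_eq]; omega
    · rw [Sigma.mk.inj_iff]; simp only [heq_eq_eq]; omega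
  · rintro ⟨a, s⟩ hq
    simp only [Finset.mem_sigma, Finset.mem_Icc, Finset.mem_filter, Finset.mem_range] at hq
    dsimp only
    split_ifs with h
    · rw [Sigma.mk.inj_iff]; simp only [heq_eq_eq]; omega
    · rw [Sigma.mk.inj_iff]; simp only [heq_eq_eq]; omega
  · rintro ⟨j, i⟩ hp
    rfl
end

section
/- For every positive integer n, ∏_{1 ≤ i ≤ j ≤ n} (i + j + 1)/(i + j − 1) = C(2n + 1, n), as an identity of rational numbers. -/
open Finset

lemma prodA (k : ℕ) : ∀ m : ℕ,
    ∏ i ∈ Finset.Icc 1 m, ((i : ℚ) + k) = (Nat.factorial (m + k)) / (Nat.factorial k)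
  | 0 => by
    simp [div_self (show (Nat.factorial k : ℚ) ≠ 0 from by exact_mod_cast (Nat.factorial_pos k).ne')]
  | (m+1) => by
    rw [Finset.prod_Icc_succ_top (by omega : 1 ≤ m + 1), prodA k m]
    have h1 : (Nat.factorial k : ℚ) ≠ 0 := by exact_mod_cast (Nat.factorial_pos k).ne'
    have h2 : Nat.factorial (m + 1 + k) = (m + k + 1) * Nat.factorial (m + k) := by
      have : m + 1 + k = (m + k) + 1 := by omega
      rw [this, Nat.factorial_succ]
    rw [h2]
    push_cast
    field_simp
    ring

lemma B2n_aux (n : ℕ) :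
    (∏ j ∈ Finset.Icc 1 n, ∏ i ∈ Finset.Icc 1 j,
        (((i : ℚ) + j + 1) / ((i : ℚ) + j - 1)))
      = Nat.choose (2 * n + 1) n := by
  induction n with
  | zero => simp
  | succ n ih =>
    rw [Finset.prod_Icc_succ_top (by omega : 1 ≤ n + 1), ih]
    have hin : (∏ i ∈ Finset.Icc 1 (n+1),
        (((i : ℚ) + (n+1 : ℕ) + 1) / ((i : ℚ) + (n+1 : ℕ) - 1)))
        = (Nat.factorial (2*n+3) / Nat.factorial (n+2)) /
          (Nat.factorial (2*n+1) / Nat.factorial n) := by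
      rw [Finset.prod_div_distrib]
      have e1 : ∏ i ∈ Finset.Icc 1 (n+1), (((i : ℚ) + (n+1 : ℕ) + 1))
          = ∏ i ∈ Finset.Icc 1 (n+1), ((i : ℚ) + (n+2 : ℕ)) := by
        apply Finset.prod_congr rfl; intro i _; push_cast; ring
      have e2 : ∏ i ∈ Finset.Icc 1 (n+1), (((i : ℚ) + (n+1 : ℕ) - 1))
          = ∏ i ∈ Finset.Icc 1 (n+1), ((i : ℚ) + (n : ℕ)) := by
        apply Finset.prod_congr rfl; intro i _; push_cast; ring
      rw [e1, e2, prodA, prodA]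
      congr 2 <;> · norm_cast <;> exact congrArg Nat.factorial (by omega)
    rw [hin]
    have hc1 : ((2*n+1).choose n : ℚ)
        = Nat.factorial (2*n+1) / (Nat.factorial n * Nat.factorial (n+1)) := by
      rw [Nat.cast_choose ℚ (by omega : n ≤ 2*n+1), show 2*n+1-n = n+1 from by omega]
    have hc2 : ((2*(n+1)+1).choose (n+1) : ℚ)
        = Nat.factorial (2*n+3) / (Nat.factorial (n+1) * Nat.factorial (n+2)) := by
      rw [Nat.cast_choose ℚ (by omega : n+1 ≤ 2*(n+1)+1),
        show 2*(n+1)+1-(n+1) = n+2 from by omega, show 2*(n+1)+1 = 2*n+3 from by omega]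
    rw [hc1, hc2]
    have f0 : ∀ m : ℕ, (Nat.factorial m : ℚ) ≠ 0 := fun m => by
      exact_mod_cast (Nat.factorial_pos m).ne'
    field_simp

theorem B2n_product (n : ℕ) (hn : 0 < n) :
    (∏ j ∈ Finset.Icc 1 n, ∏ i ∈ Finset.Icc 1 j,
        (((i : ℚ) + j + 1) / ((i : ℚ) + j - 1)))
      = Nat.choose (2 * n + 1) n := B2n_aux n
end

section
/- For every positive integer n, ∏_{1 ≤ i ≤ j ≤ n} (i + j + 2)/(i + j − 1) = 2^n · Cat(n+1), where Cat(m) = C(2m, m)/(m+1) is the m-th Catalan number. -/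
lemma prod_shift (m c : ℕ) :
    ∏ i ∈ Finset.Icc 1 m, ((i : ℚ) + c) = ((m + c).factorial : ℚ) / (c.factorial : ℚ) := by
  induction m with
  | zero =>
    have : (c.factorial : ℚ) ≠ 0 := Nat.cast_ne_zero.mpr (Nat.factorial_ne_zero c)
    simp [div_self this]
  | succ m ih =>
    rw [Finset.prod_Icc_succ_top (by omega : 1 ≤ m + 1), ih]
    have h1 : ((m + 1 + c).factorial : ℚ) = ((m + c : ℕ) + 1) * ((m + c).factorial : ℚ) := by
      rw [show m + 1 + c = (m + c) + 1 by omega, Nat.factorial_succ]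
      push_cast; ring
    have h0 : (c.factorial : ℚ) ≠ 0 := Nat.cast_ne_zero.mpr (Nat.factorial_ne_zero c)
    rw [h1]
    field_simp
    push_cast; ring

lemma aux (n : ℕ) :
    (∏ j ∈ Finset.Icc 1 n, ∏ i ∈ Finset.Icc 1 j,
        (((i : ℚ) + j + 2) / ((i : ℚ) + j - 1)))
      = 2 ^ n * ((Nat.choose (2 * (n + 1)) (n + 1) : ℚ) / ((n : ℚ) + 2)) := by
  induction n with
  | zero => norm_num
  | succ n ih =>
    rw [Finset.prod_Icc_succ_top (by omega : 1 ≤ n + 1), ih]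
    have hinner : ∏ i ∈ Finset.Icc 1 (n + 1),
        (((i : ℚ) + (↑(n + 1) : ℚ) + 2) / ((i : ℚ) + (↑(n + 1) : ℚ) - 1))
        = (((2 * n + 4).factorial : ℚ) / ((n + 3).factorial : ℚ)) /
          (((2 * n + 1).factorial : ℚ) / (n.factorial : ℚ)) := by
      rw [Finset.prod_div_distrib]
      have e1 : ∏ i ∈ Finset.Icc 1 (n + 1), ((i : ℚ) + (↑(n + 1) : ℚ) + 2)
          = ∏ i ∈ Finset.Icc 1 (n + 1), ((i : ℚ) + (n + 3 : ℕ)) := by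
        apply Finset.prod_congr rfl; intro i _; push_cast; ring
      have e2 : ∏ i ∈ Finset.Icc 1 (n + 1), ((i : ℚ) + (↑(n + 1) : ℚ) - 1)
          = ∏ i ∈ Finset.Icc 1 (n + 1), ((i : ℚ) + (n : ℕ)) := by
        apply Finset.prod_congr rfl; intro i _; push_cast; ring
      rw [e1, e2, prod_shift, prod_shift,
        show n + 1 + (n + 3) = 2 * n + 4 by omega,
        show n + 1 + n = 2 * n + 1 by omega]
    rw [hinner]
    have c1 : (Nat.choose (2 * (n + 1)) (n + 1) : ℚ)
        = ((2 * n + 2).factorial : ℚ) / (((n + 1).factorial : ℚ) * ((n + 1).factorial : ℚ)) := by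
      rw [Nat.cast_choose ℚ (by omega : n + 1 ≤ 2 * (n + 1)),
        show 2 * (n + 1) - (n + 1) = n + 1 by omega, show 2 * (n + 1) = 2 * n + 2 by omega]
    have c2 : (Nat.choose (2 * (n + 1 + 1)) (n + 1 + 1) : ℚ)
        = ((2 * n + 4).factorial : ℚ) / (((n + 2).factorial : ℚ) * ((n + 2).factorial : ℚ)) := by
      rw [Nat.cast_choose ℚ (by omega : n + 1 + 1 ≤ 2 * (n + 1 + 1)),
        show 2 * (n + 1 + 1) - (n + 1 + 1) = n + 2 by omega,
        show 2 * (n + 1 + 1) = 2 * n + 4 by omega]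
    rw [c1, c2]
    have f1 : ((n + 1).factorial : ℚ) = ((n : ℚ) + 1) * (n.factorial : ℚ) := by
      rw [Nat.factorial_succ]; push_cast; ring
    have f2 : ((n + 2).factorial : ℚ) = ((n : ℚ) + 2) * ((n + 1).factorial : ℚ) := by
      rw [show n + 2 = (n + 1) + 1 from rfl, Nat.factorial_succ]; push_cast; ring
    have f3 : ((n + 3).factorial : ℚ) = ((n : ℚ) + 3) * ((n + 2).factorial : ℚ) := by
      rw [show n + 3 = (n + 2) + 1 from rfl, Nat.factorial_succ]; push_cast; ring
    have f4 : ((2 * n + 2).factorial : ℚ) = (2 * (n : ℚ) + 2) * ((2 * n + 1).factorial : ℚ) := by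
      rw [show 2 * n + 2 = (2 * n + 1) + 1 from rfl, Nat.factorial_succ]; push_cast; ring
    have f5 : ((2 * n + 4).factorial : ℚ)
        = (2 * (n : ℚ) + 4) * (2 * (n : ℚ) + 3) * (2 * (n : ℚ) + 2) * ((2 * n + 1).factorial : ℚ) := by
      rw [show 2 * n + 4 = ((2 * n + 1) + 1) + 1 + 1 from rfl, Nat.factorial_succ,
        Nat.factorial_succ, Nat.factorial_succ]; push_cast; ring
    have nz1 : (n.factorial : ℚ) ≠ 0 := Nat.cast_ne_zero.mpr (Nat.factorial_ne_zero n)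
    have nz2 : ((2 * n + 1).factorial : ℚ) ≠ 0 := Nat.cast_ne_zero.mpr (Nat.factorial_ne_zero _)
    have nz3 : (n : ℚ) + 1 ≠ 0 := by positivity
    have nz4 : (n : ℚ) + 2 ≠ 0 := by positivity
    have nz5 : (n : ℚ) + 3 ≠ 0 := by positivity
    have nz6 : 2 * (n : ℚ) + 2 ≠ 0 := by positivity
    have nz7 : 2 * (n : ℚ) + 3 ≠ 0 := by positivity
    have nz8 : 2 * (n : ℚ) + 4 ≠ 0 := by positivity
    rw [f5, f4, f3, f2, f1]
    push_cast
    field_simp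
    ring

theorem B3n_product (n : ℕ) (hn : 0 < n) :
    (∏ j ∈ Finset.Icc 1 n, ∏ i ∈ Finset.Icc 1 j,
        (((i : ℚ) + j + 2) / ((i : ℚ) + j - 1)))
      = 2 ^ n * ((Nat.choose (2 * (n + 1)) (n + 1) : ℚ) / ((n : ℚ) + 2)) := aux n
end

section
/- For every positive integer n, ∏_{1 ≤ i ≤ j ≤ n} (i + j + 3)/(i + j − 1) = (1/2)·Cat(n+1)·Cat(n+2), where Cat(m) = C(2m, m)/(m+1) is the m-th Catalan number. -/
/-!
Row `j` of the double product telescopes: its numerators `j+4, …, 2j+3` and denominators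
`j, …, 2j-1` are the same range shifted by `4`, so the row equals
`(2j)(2j+1)(2j+2)(2j+3) / (j(j+1)(j+2)(j+3)) = 4(2j+1)(2j+3) / ((j+2)(j+3))`.
By the recurrence `(m+2) Cat(m+1) = 2(2m+1) Cat(m)` this is exactly `Cat(j+2) / Cat(j)`,
so the claim follows by induction on `n`.
-/

open Finset

theorem Finset.prod_range_div_shift {G : Type*} [CommGroupWithZero G] (f : ℕ → G)
    (hf : ∀ i, f i ≠ 0) (j a : ℕ) :
    ∏ i ∈ range j, f (i + a) / f i = ∏ k ∈ range a, f (j + k) / f k := by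
  have hsplit : (∏ i ∈ range j, f (i + a)) * ∏ k ∈ range a, f k
      = (∏ i ∈ range j, f i) * ∏ k ∈ range a, f (j + k) := by
    rw [← prod_range_add, mul_comm, add_comm j a, prod_range_add]
    simp only [add_comm]
  have hne : ∀ s : Finset ℕ, ∏ i ∈ s, f i ≠ 0 := fun s => prod_ne_zero_iff.2 fun i _ => hf i
  rw [prod_div_distrib, prod_div_distrib, div_eq_div_iff (hne _) (hne _), hsplit]
  exact mul_comm _ _

theorem prod_Icc_row_ratio (j : ℕ) (hj : 0 < j) :
    ∏ i ∈ Icc 1 j, ((i : ℚ) + j + 3) / ((i : ℚ) + j - 1)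
      = 4 * (2 * j + 1) * (2 * j + 3) / ((j + 2) * (j + 3)) := by
  have hf : ∀ i : ℕ, (i : ℚ) + j ≠ 0 := fun i => by positivity
  have hshift := prod_range_div_shift (fun i : ℕ => (i : ℚ) + j) hf j 4
  simp only [prod_range_succ, prod_range_zero] at hshift
  push_cast at hshift
  rw [← Ico_add_one_right_eq_Icc, prod_Ico_eq_prod_range, add_tsub_cancel_right]
  calc ∏ i ∈ range j, (((1 + i : ℕ) : ℚ) + j + 3) / (((1 + i : ℕ) : ℚ) + j - 1)
      = ∏ i ∈ range j, ((i : ℚ) + 4 + j) / (i + j) :=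
        prod_congr rfl fun i _ => by push_cast; ring_nf
    _ = 4 * (2 * j + 1) * (2 * j + 3) / ((j + 2) * (j + 3)) := by
        rw [hshift]
        have hj' : (j : ℚ) ≠ 0 := by positivity
        field_simp
        ring

theorem succ_succ_mul_catalan_succ (m : ℕ) :
    (m + 2) * catalan (m + 1) = 2 * (2 * m + 1) * catalan m := by
  have hc := Nat.succ_mul_centralBinom_succ m
  rw [← succ_mul_catalan_eq_centralBinom, ← succ_mul_catalan_eq_centralBinom] at hc
  apply Nat.eq_of_mul_eq_mul_left m.succ_pos
  linarith

theorem catalan_succ_eq_mul_div (m : ℕ) :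
    (catalan (m + 1) : ℚ) = 2 * (2 * m + 1) / (m + 2) * catalan m := by
  rw [div_mul_eq_mul_div, eq_div_iff (by positivity), mul_comm]
  exact_mod_cast succ_succ_mul_catalan_succ m

theorem choose_div_eq_catalan (m : ℕ) : (Nat.choose (2 * m) m : ℚ) / (m + 1) = catalan m := by
  rw [← Nat.centralBinom_eq_two_mul_choose, ← succ_mul_catalan_eq_centralBinom]
  push_cast
  field_simp

theorem prod_Icc_prod_Icc_eq_half_catalan_mul_catalan (n : ℕ) :
    ∏ j ∈ Icc 1 n, ∏ i ∈ Icc 1 j, ((i : ℚ) + j + 3) / ((i : ℚ) + j - 1)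
      = 1 / 2 * catalan (n + 1) * catalan (n + 2) := by
  induction n with
  | zero => simp [catalan_one, catalan_two]
  | succ n ih =>
    rw [prod_Icc_succ_top (by omega), ih, prod_Icc_row_ratio _ n.succ_pos,
      show n + 1 + 2 = (n + 2) + 1 from rfl, catalan_succ_eq_mul_div (n + 2),
      show n + 1 + 1 = n + 2 from rfl, catalan_succ_eq_mul_div (n + 1)]
    push_cast
    field_simp
    ring

theorem B4n_product_general (n : ℕ) :
    (∏ j ∈ Finset.Icc 1 n, ∏ i ∈ Finset.Icc 1 j,
        (((i : ℚ) + j + 3) / ((i : ℚ) + j - 1)))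
      = (1 / 2) * ((Nat.choose (2 * (n + 1)) (n + 1) : ℚ) / ((n : ℚ) + 2))
          * ((Nat.choose (2 * (n + 2)) (n + 2) : ℚ) / ((n : ℚ) + 3)) := by
  rw [prod_Icc_prod_Icc_eq_half_catalan_mul_catalan, ← choose_div_eq_catalan,
    ← choose_div_eq_catalan]
  push_cast
  ring_nf

theorem B4n_product (n : ℕ) (hn : 0 < n) :
    (∏ j ∈ Finset.Icc 1 n, ∏ i ∈ Finset.Icc 1 j,
        (((i : ℚ) + j + 3) / ((i : ℚ) + j - 1)))
      = (1 / 2) * ((Nat.choose (2 * (n + 1)) (n + 1) : ℚ) / ((n : ℚ) + 2))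
          * ((Nat.choose (2 * (n + 2)) (n + 2) : ℚ) / ((n : ℚ) + 3)) :=
  B4n_product_general n
end

section
/- For every integer n ≥ 1, ∑_{j=1}^{n} A(n, j) = ∏_{i=0}^{n−1} (3i+1)!/(n+i)!, where A(n, j) = C(n+j−2, j−1) · (2n−j−1)!/(n−j)! · ∏_{i=0}^{n−2} (3i+1)!/(n+i)!, as an identity of rational numbers. -/
open Finset Nat

lemma hockey (r m : ℕ) :
    ∑ k ∈ range (m + 1), (r + k).choose k = (r + m + 1).choose m := by
  induction m with
  | zero => simp
  | succ m ih =>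
    rw [Finset.sum_range_succ, ih, show r + (m + 1) + 1 = (r + m + 1) + 1 from by ring,
      Nat.choose_succ_succ' (r + m + 1) m, show r + (m + 1) = r + m + 1 from by ring]

lemma par (s : ℕ) : ∀ m r : ℕ,
    ∑ k ∈ range (m + 1), (r + k).choose k * (s + (m - k)).choose (m - k)
      = (r + s + m + 1).choose m := by
  induction s with
  | zero =>
    intro m r
    simpa using hockey r m
  | succ s ihs =>
    intro m
    induction m with
    | zero => intro r; simp
    | succ m ihm =>
      intro r
      rw [Finset.sum_range_succ]
      have step : ∀ k ∈ range (m + 1),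
          (r + k).choose k * (s + 1 + (m + 1 - k)).choose (m + 1 - k)
            = (r + k).choose k * (s + 1 + (m - k)).choose (m - k)
              + (r + k).choose k * (s + (m + 1 - k)).choose (m + 1 - k) := by
        intro k hk
        have hkm : k ≤ m := Nat.lt_succ_iff.mp (Finset.mem_range.mp hk)
        obtain ⟨d, rfl⟩ : ∃ d, m = k + d := ⟨m - k, by omega⟩
        rw [show k + d + 1 - k = d + 1 from by omega, show k + d - k = d from by omega,
          show s + 1 + (d + 1) = (s + 1 + d) + 1 from by omega,
          show s + (d + 1) = s + 1 + d from by omega,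
          Nat.choose_succ_succ, Nat.mul_add]
      rw [Finset.sum_congr rfl step, Finset.sum_add_distrib, ihm r]
      have h4 := ihs (m + 1) r
      rw [Finset.sum_range_succ] at h4
      simp only [Nat.sub_self, Nat.add_zero, Nat.choose_zero_right, mul_one] at h4 ⊢
      rw [add_assoc, h4, show r + (s + 1) + (m + 1) + 1 = (r + s + (m + 1) + 1) + 1 from by ring,
        Nat.choose_succ_succ' (r + s + (m + 1) + 1) m,
        show r + (s + 1) + m + 1 = r + s + (m + 1) + 1 from by ring]

lemma key (m : ℕ) :
    ∑ k ∈ range (m + 1), (m + k).choose k * (2 * m - k).choose m = (3 * m + 1).choose m := by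
  rw [show 3 * m + 1 = m + m + m + 1 from by ring, ← par m m m]
  refine Finset.sum_congr rfl fun k hk => ?_
  have hkm : k ≤ m := Nat.lt_succ_iff.mp (Finset.mem_range.mp hk)
  congr 1
  rw [show m + (m - k) = 2 * m - k from by omega,
    ← Nat.choose_symm (by omega : m ≤ 2 * m - k)]
  congr 1
  omega

theorem refined_ASM_sum (n : ℕ) (hn : 1 ≤ n) :
    ∑ j ∈ Finset.Icc 1 n,
        ((Nat.choose (n + j - 2) (j - 1) : ℚ)
          * ((Nat.factorial (2 * n - j - 1) : ℚ) / (Nat.factorial (n - j) : ℚ))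
          * ∏ i ∈ Finset.range (n - 1),
              ((Nat.factorial (3 * i + 1) : ℚ) / (Nat.factorial (n + i) : ℚ)))
      = ∏ i ∈ Finset.range n,
          ((Nat.factorial (3 * i + 1) : ℚ) / (Nat.factorial (n + i) : ℚ)) := by
  obtain ⟨m, rfl⟩ : ∃ m, n = m + 1 := ⟨n - 1, by omega⟩
  simp only [Nat.add_sub_cancel]
  rw [Finset.prod_range_succ, ← Finset.sum_mul]
  have hsum : (∑ j ∈ Finset.Icc 1 (m + 1),
      ((Nat.choose (m + 1 + j - 2) (j - 1) : ℚ)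
        * ((Nat.factorial (2 * (m + 1) - j - 1) : ℚ) / (Nat.factorial (m + 1 - j) : ℚ))))
      = (Nat.factorial (3 * m + 1) : ℚ) / (Nat.factorial (m + 1 + m) : ℚ) := by
    rw [← Finset.Ico_add_one_right_eq_Icc, Finset.sum_Ico_eq_sum_range,
      show m + 1 + 1 - 1 = m + 1 from by omega]
    have step : ∀ k ∈ Finset.range (m + 1),
        ((Nat.choose (m + 1 + (1 + k) - 2) ((1 + k) - 1) : ℚ)
          * ((Nat.factorial (2 * (m + 1) - (1 + k) - 1) : ℚ)
              / (Nat.factorial (m + 1 - (1 + k)) : ℚ)))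
        = (((m + k).choose k * (2 * m - k).choose m * Nat.factorial m : ℕ) : ℚ) := by
      intro k hk
      have hkm : k ≤ m := Nat.lt_succ_iff.mp (Finset.mem_range.mp hk)
      rw [show m + 1 + (1 + k) - 2 = m + k from by omega,
        show (1 + k) - 1 = k from by omega,
        show 2 * (m + 1) - (1 + k) - 1 = 2 * m - k from by omega,
        show m + 1 - (1 + k) = m - k from by omega]
      have hfac : (2 * m - k).choose m * Nat.factorial m * Nat.factorial (m - k)
          = Nat.factorial (2 * m - k) := by
        have h := Nat.choose_mul_factorial_mul_factorial (show m ≤ 2 * m - k by omega)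
        rwa [show 2 * m - k - m = m - k from by omega] at h
      have hne : (Nat.factorial (m - k) : ℚ) ≠ 0 :=
        Nat.cast_ne_zero.mpr (Nat.factorial_ne_zero _)
      rw [← hfac]
      push_cast
      field_simp
    rw [Finset.sum_congr rfl step, ← Nat.cast_sum, ← Finset.sum_mul, key m]
    have hfac2 : (3 * m + 1).choose m * Nat.factorial m * Nat.factorial (2 * m + 1)
        = Nat.factorial (3 * m + 1) := by
      have h := Nat.choose_mul_factorial_mul_factorial (show m ≤ 3 * m + 1 by omega)
      rwa [show 3 * m + 1 - m = 2 * m + 1 from by omega] at h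
    rw [show m + 1 + m = 2 * m + 1 from by omega,
      eq_div_iff (Nat.cast_ne_zero.mpr (Nat.factorial_ne_zero (2 * m + 1)) : ((2*m+1).factorial : ℚ) ≠ 0)]
    exact_mod_cast hfac2
  rw [hsum]
  ring
end

section
/- For integers n ≥ 1 and 1 ≤ k ≤ n − 1, the number of weakly increasing sequences 1 ≤ t₁ ≤ t₂ ≤ ... ≤ t_k ≤ n − 1 satisfying t_j ≥ j for all j equals ((n − k)/n) · C(n + k − 1, k). -/
/-!
Let `T(n, k)` be the number of such sequences. Sorting them by whether the last entry is the
largest allowed value `n - 1` (dropping that entry leaves a sequence of length `k - 1`) or not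
(then all entries are `≤ n - 2`) gives `T(n + 1, k + 1) = T(n, k + 1) + T(n + 1, k)` for
`k < n`, with `T(n, 0) = 1` and `T(n, n) = 0`. The ballot numbers `(n - k) / n * C(n + k - 1, k)`
satisfy the same recurrence and boundary values, by Pascal's rule.
-/

open Finset

theorem Fin.monotone_snoc_iff {α : Type*} [Preorder α] {n : ℕ} {s : Fin n → α} {a : α} :
    Monotone (Fin.snoc s a : Fin (n + 1) → α) ↔ Monotone s ∧ ∀ i, s i ≤ a := by
  constructor
  · intro h
    refine ⟨fun i j hij => ?_, fun i => ?_⟩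
    · simpa using h (Fin.castSucc_le_castSucc_iff.2 hij)
    · simpa using h (Fin.le_last i.castSucc)
  · rintro ⟨hs, ha⟩ i j hij
    cases j using Fin.lastCases with
    | last => cases i using Fin.lastCases <;> simp [ha]
    | cast j =>
      cases i using Fin.lastCases with
      | last => exact absurd hij (not_le.2 (Fin.castSucc_lt_last j))
      | cast i => simpa using hs (Fin.castSucc_le_castSucc_iff.1 hij)

def rowTableaux (n k : ℕ) : Finset (Fin k → ℕ) :=
  {t ∈ Fintype.piFinset fun _ => range n | Monotone t ∧ ∀ j : Fin k, (j : ℕ) + 1 ≤ t j}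

theorem mem_rowTableaux {n k : ℕ} {t : Fin k → ℕ} :
    t ∈ rowTableaux n k ↔ Monotone t ∧ (∀ j : Fin k, (j : ℕ) + 1 ≤ t j) ∧ ∀ j, t j < n := by
  simp only [rowTableaux, mem_filter, Fintype.mem_piFinset, mem_range]
  tauto

theorem card_rowTableaux_zero_right (n : ℕ) : #(rowTableaux n 0) = 1 := by
  rw [card_eq_one]
  exact ⟨Fin.elim0, eq_singleton_iff_unique_mem.2
    ⟨mem_rowTableaux.2 ⟨fun i => i.elim0, fun i => i.elim0, fun i => i.elim0⟩,
      fun t _ => funext fun i => i.elim0⟩⟩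

theorem rowTableaux_succ_eq_empty {n k : ℕ} (h : n ≤ k + 1) : rowTableaux n (k + 1) = ∅ := by
  refine eq_empty_of_forall_notMem fun t ht => ?_
  obtain ⟨-, hlow, hup⟩ := mem_rowTableaux.1 ht
  have := hlow (Fin.last k)
  have := hup (Fin.last k)
  simp only [Fin.val_last] at *
  omega

theorem snoc_mem_rowTableaux_iff {m k : ℕ} {s : Fin k → ℕ} :
    (Fin.snoc s m : Fin (k + 1) → ℕ) ∈ rowTableaux (m + 1) (k + 1) ↔
      s ∈ rowTableaux (m + 1) k ∧ k + 1 ≤ m := by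
  simp only [mem_rowTableaux, Fin.monotone_snoc_iff, Fin.forall_fin_succ', Fin.snoc_castSucc,
    Fin.snoc_last, Fin.val_last, Fin.val_castSucc, Nat.lt_succ_iff]
  tauto

theorem card_filter_rowTableaux_last_eq (m k : ℕ) (h : k + 1 ≤ m) :
    #{t ∈ rowTableaux (m + 1) (k + 1) | t (Fin.last k) = m} = #(rowTableaux (m + 1) k) := by
  refine card_nbij' Fin.init (fun s => Fin.snoc s m) (fun t ht => ?_) (fun s hs => ?_)
    (fun t ht => ?_) (fun s _ => Fin.init_snoc _ _)
  · obtain ⟨ht, hlast⟩ := mem_filter.1 ht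
    rw [← Fin.snoc_init_self t, hlast, snoc_mem_rowTableaux_iff] at ht
    exact ht.1
  · exact mem_filter.2 ⟨snoc_mem_rowTableaux_iff.2 ⟨hs, h⟩, Fin.snoc_last _ _⟩
  · obtain ⟨-, rfl⟩ := mem_filter.1 ht
    exact Fin.snoc_init_self t

theorem filter_rowTableaux_last_ne (m k : ℕ) :
    {t ∈ rowTableaux (m + 1) (k + 1) | t (Fin.last k) ≠ m} = rowTableaux m (k + 1) := by
  ext t
  simp only [mem_filter, mem_rowTableaux]
  constructor
  · rintro ⟨⟨hmono, hlow, hup⟩, hne⟩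
    refine ⟨hmono, hlow, fun j => ?_⟩
    have := hmono (Fin.le_last j)
    have := hup (Fin.last k)
    omega
  · rintro ⟨hmono, hlow, hup⟩
    exact ⟨⟨hmono, hlow, fun j => (hup j).trans (lt_add_one m)⟩, (hup _).ne⟩

theorem card_rowTableaux_succ_succ {m k : ℕ} (h : k + 1 ≤ m) :
    #(rowTableaux (m + 1) (k + 1)) = #(rowTableaux m (k + 1)) + #(rowTableaux (m + 1) k) := by
  rw [← card_filter_add_card_filter_not (s := rowTableaux (m + 1) (k + 1))
    (fun t => t (Fin.last k) = m), card_filter_rowTableaux_last_eq m k h, filter_rowTableaux_last_ne, add_comm]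

def ballot (n k : ℕ) : ℚ := ((n : ℚ) - k) / n * (n + k - 1).choose k

theorem ballot_zero_right {n : ℕ} (hn : n ≠ 0) : ballot n 0 = 1 := by
  simp [ballot, hn]

theorem ballot_self (n : ℕ) : ballot n n = 0 := by
  simp [ballot]

theorem ballot_succ_succ {m k : ℕ} (hm : m ≠ 0) :
    ballot (m + 1) (k + 1) = ballot m (k + 1) + ballot (m + 1) k := by
  have hpascal : ((m + k + 1).choose (k + 1) : ℚ) = (m + k).choose k + (m + k).choose (k + 1) := by
    exact_mod_cast Nat.choose_succ_succ (m + k) k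
  have hshift : ((m + k).choose (k + 1) : ℚ) * (k + 1) = (m + k).choose k * m := by
    have := Nat.choose_succ_right_eq (m + k) k
    rw [Nat.add_sub_cancel] at this
    exact_mod_cast this
  simp only [ballot, show m + 1 + (k + 1) - 1 = m + k + 1 by omega,
    show m + (k + 1) - 1 = m + k by omega, show m + 1 + k - 1 = m + k by omega, hpascal]
  field_simp
  push_cast
  linear_combination hshift

theorem card_rowTableaux : ∀ {n k : ℕ}, n ≠ 0 → k ≤ n → (#(rowTableaux n k) : ℚ) = ballot n k
  | n, 0, hn, _ => by rw [card_rowTableaux_zero_right, ballot_zero_right hn, Nat.cast_one]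
  | m + 1, k + 1, _, hk => by
    rcases Nat.lt_or_ge k m with h | h
    · rw [card_rowTableaux_succ_succ h, Nat.cast_add, ballot_succ_succ (by omega),
        card_rowTableaux (by omega) h, card_rowTableaux m.succ_ne_zero (by omega)]
    · obtain rfl : k = m := by omega
      rw [rowTableaux_succ_eq_empty le_rfl, card_empty, Nat.cast_zero, ballot_self]

theorem ballot_count_of_row_tableaux_general (n k : ℕ) (hn : 1 ≤ n)
    (hk2 : k ≤ n - 1) :
    (Nat.card {t : Fin k → ℕ // Monotone t ∧ (∀ j : Fin k, (j : ℕ) + 1 ≤ t j)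
        ∧ (∀ j : Fin k, t j ≤ n - 1)} : ℚ)
      = (((n : ℚ) - k) / n) * Nat.choose (n + k - 1) k := by
  have hcard : Nat.card {t : Fin k → ℕ // Monotone t ∧ (∀ j : Fin k, (j : ℕ) + 1 ≤ t j)
      ∧ (∀ j : Fin k, t j ≤ n - 1)} = #(rowTableaux n k) := by
    rw [← Nat.card_eq_finsetCard]
    refine Nat.card_congr (Equiv.subtypeEquivRight fun t => ?_)
    simp only [mem_rowTableaux, Nat.le_sub_one_iff_lt hn]
  rw [hcard]
  exact card_rowTableaux (by omega) (by omega)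

theorem ballot_count_of_row_tableaux (n k : ℕ) (hn : 1 ≤ n) (hk1 : 1 ≤ k)
    (hk2 : k ≤ n - 1) :
    (Nat.card {t : Fin k → ℕ // Monotone t ∧ (∀ j : Fin k, (j : ℕ) + 1 ≤ t j)
        ∧ (∀ j : Fin k, t j ≤ n - 1)} : ℚ)
      = (((n : ℚ) - k) / n) * Nat.choose (n + k - 1) k :=
  ballot_count_of_row_tableaux_general n k hn hk2
end
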